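/- Let M be a connected topological space and g : M → ℝ a continuous function. Suppose g is locally constant on the open set U = {x : g(x) ≠ 0}. Then g is constant on M. -/

import Mathlib

open Set

lemma IsLocallyConstant.isOpen_fiber_of_domRestrict {X Y : Type*} [TopologicalSpace X]
    {U : Set X} (hU : IsOpen U) {f : X → Y} (hf : IsLocallyConstant (U.domRestrict f)) {y : Y}
    (hy : f ⁻¹' {y} ⊆ U) : IsOpen (f ⁻¹' {y}) := by
  have hfiber : ((↑) : U → X) '' (U.domRestrict f ⁻¹' {y}) = f ⁻¹' {y} := by
    ext x
    constructor
    · rintro ⟨z, hz, rfl⟩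
      exact hz
    · exact fun hx => ⟨⟨x, hy hx⟩, hx, rfl⟩
  exact hfiber ▸ hU.isOpenMap_subtype_val _ (hf.isOpen_fiber y)

/-- The level sets of `f` at values other than `c` are clopen, so there is at most one. -/
theorem Continuous.apply_eq_of_isLocallyConstant_domRestrict_ne {X Y : Type*}
    [TopologicalSpace X] [PreconnectedSpace X] [TopologicalSpace Y] [T1Space Y] {f : X → Y}
    (hf : Continuous f) {c : Y} (hloc : IsLocallyConstant ({x | f x ≠ c}.domRestrict f))
    (x y : X) : f x = f y := by
  suffices h : ∀ x, f x ≠ c → ∀ y, f y = f x by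
    by_cases hx : f x = c
    · by_cases hy : f y = c
      · rw [hx, hy]
      · exact h y hy x
    · exact (h x hx y).symm
  intro x hx
  have hclopen : IsClopen (f ⁻¹' {f x}) := by
    refine ⟨isClosed_singleton.preimage hf, hloc.isOpen_fiber_of_domRestrict ?_ ?_⟩
    · exact isOpen_compl_singleton.preimage hf
    · intro z hz
      simpa [mem_singleton_iff.mp hz] using hx
  intro y
  simpa using (hclopen.eq_univ ⟨x, rfl⟩).ge (mem_univ y)

theorem stmt_9 {M : Type*} [TopologicalSpace M] [ConnectedSpace M]
    (g : M → ℝ) (hg : Continuous g)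
    (hloc : IsLocallyConstant (Set.restrict {x : M | g x ≠ 0} g)) :
    ∀ x y : M, g x = g y :=
  hg.apply_eq_of_isLocallyConstant_domRestrict_ne hloc
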